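/- arXiv:2109.07530 — 2 statements merged into one kernel-verified Lean document; each statement's English description precedes it below -/
import Mathlib

section
/- Let N > 1, κ ∈ {−1, 0, 1}, K = κ(N−1), λ ∈ (0,1], and L > 0, with L < π in the case κ = 1. Then for every ε > 0 there exists δ₀ > 0, depending only on N, λ, L, ε, such that for every D ∈ [λL, L] and every x ∈ (0, δ₀) one has |f_{K,N,D}(x)·k_D / x^{N−1} − 1| ≤ ε; i.e. f_{K,N,D}(x) = (x^{N−1}/k_D)(1 + o(1)) as x → 0⁺, uniformly in D ∈ [λL, L]. -/
open MeasureTheory Filter Set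

/-- The function `s_κ`. -/
noncomputable def sK (κ θ : ℝ) : ℝ :=
  if 0 < κ then Real.sin (Real.sqrt κ * θ) / Real.sqrt κ
  else if κ = 0 then θ
  else Real.sinh (Real.sqrt (-κ) * θ) / Real.sqrt (-κ)

/-- `k_D = ∫₀^D s_κ(t)^(N-1) dt`. -/
noncomputable def kD (κ N D : ℝ) : ℝ := ∫ t in (0:ℝ)..D, sK κ t ^ (N - 1)

/-- The function `f_{K,N,D}` (with `K = κ(N-1)`). -/
noncomputable def fKND (κ N D x : ℝ) : ℝ :=
  ((∫ y in (0:ℝ)..x, (sK κ (D - y) / sK κ (D - x)) ^ (N - 1)) +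
    ∫ y in x..D, (sK κ y / sK κ x) ^ (N - 1))⁻¹

/-- The model density `h^a_{K,N,D}` (with `K = κ(N-1)`). -/
noncomputable def hKND (κ N D a x : ℝ) : ℝ :=
  if x ≤ a then fKND κ N D a * (sK κ (D - x) / sK κ (D - a)) ^ (N - 1)
  else fKND κ N D a * (sK κ x / sK κ a) ^ (N - 1)

/-- The volume map `v_{K,N,D}(a) = ∫₀^a h^a_{K,N,D}`. -/
noncomputable def vKND (κ N D a : ℝ) : ℝ := ∫ x in (0:ℝ)..a, hKND κ N D a x

/-- `ω_N = π^(N/2)/Γ(N/2+1)`. -/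
noncomputable def omegaN (N : ℝ) : ℝ := Real.pi ^ (N / 2) / Real.Gamma (N / 2 + 1)

/-- `Vol_{K,N}(r) = N ω_N ∫₀^r s_κ(t)^(N-1) dt` (with `K = κ(N-1)`). -/
noncomputable def VolKN (κ N r : ℝ) : ℝ := N * omegaN N * ∫ t in (0:ℝ)..r, sK κ t ^ (N - 1)

/-- The coefficient `σ^{(s)}_{K,N-1}(θ)`, valued in `[0,∞]`. -/
noncomputable def sigmaE (K N s θ : ℝ) : ENNReal :=
  if (N - 1) * Real.pi ^ 2 ≤ K * θ ^ 2 then ⊤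
  else ENNReal.ofReal (sK (K / (N - 1)) (s * θ) / sK (K / (N - 1)) θ)

/-- A nonnegative continuous function `h` on the interval `I` is an `MCP(K,N)` density. -/
def IsMCPDensity (K N : ℝ) (I : Set ℝ) (h : ℝ → ℝ) : Prop :=
  ContinuousOn h I ∧ (∀ x ∈ I, 0 ≤ h x) ∧
    ∀ x₀ ∈ I, ∀ x₁ ∈ I, ∀ t ∈ Set.Icc (0:ℝ) 1,
      sigmaE K N (1 - t) |x₁ - x₀| ^ (N - 1) * ENNReal.ofReal (h x₀) ≤
        ENNReal.ofReal (h (t * x₁ + (1 - t) * x₀))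

/-- The measure `h·𝓛¹` restricted to `[0,D]`. -/
noncomputable def mcMeasure (D : ℝ) (h : ℝ → ℝ) : Measure ℝ :=
  (volume.restrict (Set.Icc 0 D)).withDensity fun x => ENNReal.ofReal (h x)

/-- The outer Minkowski content `μ⁺(E) = liminf_{ρ→0⁺} (μ(E^ρ) - μ(E))/ρ`. -/
noncomputable def minkContent (μ : Measure ℝ) (E : Set ℝ) : ℝ :=
  Filter.liminf (fun ρ : ℝ => ((μ (Metric.thickening ρ E)).toReal - (μ E).toReal) / ρ)
    (nhdsWithin 0 (Set.Ioi 0))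

open Topology intervalIntegral

/-! Write `1 / f(x) = A + B` with `A = ∫₀^x (s(D-y)/s(D-x))^{N-1} dy` and
`B = (k_D - k_x) / s(x)^{N-1}`. For `x < λL/2` the ratio in `A` is bounded uniformly in `D` by
compactness, so `x^{N-1} A = O(x^N)`; moreover `k_D ≥ k_{λL} > 0`, `k_x → 0`, and `x / s(x) → 1`
since `s_κ(0) = 0` and `s_κ'(0) = 1`. Hence `x^{N-1} / (f(x) k_D)` is within `g(x) → 0` of `1`
for every `D ∈ [λL, L]`, and so is its reciprocal. -/

lemma abs_inv_sub_one_le_two_mul {q g : ℝ} (hq : |q - 1| ≤ g) (hg : g ≤ 1 / 2) :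
    |q⁻¹ - 1| ≤ 2 * g := by
  have hq0 : 0 < q := by linarith [neg_abs_le (q - 1)]
  rw [show q⁻¹ - 1 = -(q - 1) / q by field_simp; ring, abs_div, abs_neg, abs_of_pos hq0,
    div_le_iff₀ hq0]
  nlinarith [abs_nonneg (q - 1), neg_abs_le (q - 1)]

lemma abs_mul_add_div_sub_one_le {X σ A α k j m : ℝ} (hX : 0 < X) (hσ : 0 < σ) (hA : 0 ≤ A)
    (hAα : A ≤ α) (hm : 0 < m) (hmk : m ≤ k) (hj : 0 ≤ j) :
    |X * (A + (k - j) / σ) / k - 1| ≤ X * α / m + |X / σ - 1| + X / σ * (j / m) := by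
  have hk : 0 < k := hm.trans_le hmk
  have hfirst : X * A / k ≤ X * α / m :=
    div_le_div₀ (mul_nonneg hX.le (hA.trans hAα)) (mul_le_mul_of_nonneg_left hAα hX.le) hm hmk
  have hlast : X / σ * (j / k) ≤ X / σ * (j / m) :=
    mul_le_mul_of_nonneg_left (div_le_div_of_nonneg_left hj hm hmk) (by positivity)
  calc |X * (A + (k - j) / σ) / k - 1| = |X * A / k + (X / σ - 1) - X / σ * (j / k)| := by
        congr 1; field_simp; ring
    _ ≤ |X * A / k| + |X / σ - 1| + |X / σ * (j / k)| :=
        (abs_sub _ _).trans (by gcongr; exact abs_add_le _ _)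
    _ ≤ X * α / m + |X / σ - 1| + X / σ * (j / m) := by
        rw [abs_of_nonneg (div_nonneg (mul_nonneg hX.le hA) hk.le),
          abs_of_nonneg (by positivity : 0 ≤ X / σ * (j / k))]
        linarith

lemma IsCompact.exists_forall_div_le {s : ℝ → ℝ} (hs : Continuous s) {K : Set ℝ}
    (hK : IsCompact K) (hpos : ∀ v ∈ K, 0 < s v) : ∃ M, ∀ u ∈ K, ∀ v ∈ K, s u / s v ≤ M := by
  have hcont : ContinuousOn (fun q : ℝ × ℝ => s q.1 / s q.2) (K ×ˢ K) :=
    (hs.comp continuous_fst).continuousOn.div (hs.comp continuous_snd).continuousOn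
      fun q hq => (hpos q.2 hq.2).ne'
  obtain ⟨M, hM⟩ := (hK.prod hK).bddAbove_image hcont
  exact ⟨M, fun u hu v hv => hM ⟨(u, v), ⟨hu, hv⟩, rfl⟩⟩

/-- `fKND κ N D x = (fDenom (sK κ) (N - 1) D x)⁻¹`. -/
noncomputable def fDenom (s : ℝ → ℝ) (p D x : ℝ) : ℝ :=
  (∫ y in (0:ℝ)..x, (s (D - y) / s (D - x)) ^ p) + ∫ y in x..D, (s y / s x) ^ p

section Asymptotics

variable {s : ℝ → ℝ} {p b : ℝ}

lemma intervalIntegrable_rpow (hs : Continuous s) (hp : 0 < p) (u v : ℝ) :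
    IntervalIntegrable (fun t => s t ^ p) volume u v :=
  (hs.rpow_const fun _ => Or.inr hp.le).intervalIntegrable u v

lemma integral_rpow_pos (hs : Continuous s) (hp : 0 < p) (hpos : ∀ t ∈ Ioc 0 b, 0 < s t)
    {x : ℝ} (hx : x ∈ Ioc 0 b) : 0 < ∫ t in (0:ℝ)..x, s t ^ p :=
  intervalIntegral_pos_of_pos_on (intervalIntegrable_rpow hs hp 0 x)
    (fun t ht => Real.rpow_pos_of_pos (hpos t ⟨ht.1, ht.2.le.trans hx.2⟩) p) hx.1

lemma integral_rpow_mono (hs : Continuous s) (hp : 0 < p) (hpos : ∀ t ∈ Ioc 0 b, 0 < s t)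
    {x D : ℝ} (hx : 0 ≤ x) (hxD : x ≤ D) (hD : D ≤ b) :
    ∫ t in (0:ℝ)..x, s t ^ p ≤ ∫ t in (0:ℝ)..D, s t ^ p := by
  refine integral_mono_interval le_rfl hx hxD ?_ (intervalIntegrable_rpow hs hp 0 D)
  filter_upwards [ae_restrict_mem measurableSet_Ioc] with t ht
  exact (Real.rpow_pos_of_pos (hpos t ⟨ht.1, ht.2.trans hD⟩) p).le

lemma integral_div_rpow_eq (hs : Continuous s) (hp : 0 < p) (hpos : ∀ t ∈ Ioc 0 b, 0 < s t)
    {x D : ℝ} (hx : 0 < x) (hxD : x ≤ D) (hD : D ≤ b) :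
    ∫ y in x..D, (s y / s x) ^ p =
      ((∫ t in (0:ℝ)..D, s t ^ p) - ∫ t in (0:ℝ)..x, s t ^ p) / s x ^ p := by
  rw [integral_interval_sub_left (intervalIntegrable_rpow hs hp 0 D)
    (intervalIntegrable_rpow hs hp 0 x), ← intervalIntegral.integral_div]
  refine integral_congr fun y hy => ?_
  rw [uIcc_of_le hxD] at hy
  exact Real.div_rpow (hpos y ⟨hx.trans_le hy.1, hy.2.trans hD⟩).le
    (hpos x ⟨hx, hxD.trans hD⟩).le p

lemma integral_ratio_rpow_nonneg (hpos : ∀ t ∈ Ioc 0 b, 0 < s t)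
    {x D : ℝ} (hx : 0 < x) (hxD : x < D) (hD : D ≤ b) :
    0 ≤ ∫ y in (0:ℝ)..x, (s (D - y) / s (D - x)) ^ p := by
  refine integral_nonneg hx.le fun y hy => Real.rpow_nonneg (div_nonneg ?_ ?_) p
  · exact (hpos _ ⟨by linarith [hy.2], by linarith [hy.1]⟩).le
  · exact (hpos _ ⟨by linarith, by linarith⟩).le

lemma integral_ratio_rpow_le (hs : Continuous s) (hp : 0 < p) (hpos : ∀ t ∈ Ioc 0 b, 0 < s t)
    {a M x D : ℝ} (ha : 0 < a) (hM : ∀ u ∈ Icc a b, ∀ v ∈ Icc a b, s u / s v ≤ M)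
    (hx : 0 < x) (hxD : a ≤ D - x) (hD : D ≤ b) :
    ∫ y in (0:ℝ)..x, (s (D - y) / s (D - x)) ^ p ≤ x * M ^ p := by
  have hmem : ∀ y ∈ Icc 0 x, D - y ∈ Icc a b := fun y hy => ⟨by linarith [hy.2], by linarith [hy.1]⟩
  have hint : IntervalIntegrable (fun y => (s (D - y) / s (D - x)) ^ p) volume 0 x :=
    (((hs.comp (continuous_const.sub continuous_id)).div_const _).rpow_const
      fun _ => Or.inr hp.le).intervalIntegrable 0 x
  calc ∫ y in (0:ℝ)..x, (s (D - y) / s (D - x)) ^ p ≤ ∫ _ in (0:ℝ)..x, M ^ p := by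
        refine integral_mono_on hx.le hint intervalIntegrable_const fun y hy => ?_
        have hpos' : ∀ v ∈ Icc a b, 0 < s v := fun v hv => hpos v ⟨ha.trans_le hv.1, hv.2⟩
        exact Real.rpow_le_rpow
          (div_nonneg (hpos' _ (hmem y hy)).le (hpos' _ (hmem x ⟨hx.le, le_rfl⟩)).le)
          (hM _ (hmem y hy) _ (hmem x ⟨hx.le, le_rfl⟩)) hp.le
    _ = x * M ^ p := by simp

lemma tendsto_bound_nhdsGT_zero (hs : Continuous s) (hp : 0 < p)
    (hlim : Tendsto (fun x => s x / x) (𝓝[>] 0) (𝓝 1)) (M m : ℝ) :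
    Tendsto (fun x => x ^ p * (x * M ^ p) / m + |(x / s x) ^ p - 1| +
      (x / s x) ^ p * ((∫ t in (0:ℝ)..x, s t ^ p) / m)) (𝓝[>] 0) (𝓝 0) := by
  have hx : Tendsto (fun x : ℝ => x) (𝓝[>] 0) (𝓝 0) :=
    (continuous_id.tendsto 0).mono_left nhdsWithin_le_nhds
  have hxp : Tendsto (fun x : ℝ => x ^ p) (𝓝[>] 0) (𝓝 0) := by
    simpa [Real.zero_rpow hp.ne'] using hx.rpow_const (Or.inr hp.le)
  have hratio : Tendsto (fun x => (x / s x) ^ p) (𝓝[>] 0) (𝓝 1) := by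
    simpa using (hlim.inv₀ one_ne_zero).rpow_const (Or.inr hp.le)
  have hk : Tendsto (fun x => ∫ t in (0:ℝ)..x, s t ^ p) (𝓝[>] 0) (𝓝 0) := by
    simpa using ((continuous_primitive (intervalIntegrable_rpow hs hp) 0).tendsto 0).mono_left
      nhdsWithin_le_nhds
  simpa using (((hxp.mul (hx.mul_const (M ^ p))).div_const m).add
    (hratio.sub_const 1).abs).add (hratio.mul (hk.div_const m))

theorem eventually_forall_abs_inv_fDenom_mul_div_sub_one_le (hs : Continuous s) (hp : 0 < p)
    {a : ℝ} (ha : 0 < a) (hpos : ∀ t ∈ Ioc 0 b, 0 < s t)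
    (hlim : Tendsto (fun x => s x / x) (𝓝[>] 0) (𝓝 1)) {ε : ℝ} (hε : 0 < ε) :
    ∀ᶠ x in 𝓝[>] 0, ∀ D ∈ Icc a b,
      |(fDenom s p D x)⁻¹ * (∫ t in (0:ℝ)..D, s t ^ p) / x ^ p - 1| ≤ ε := by
  obtain ⟨M, hM⟩ := (isCompact_Icc (a := a / 2) (b := b)).exists_forall_div_le hs
    fun v hv => hpos v ⟨by linarith [hv.1], hv.2⟩
  set m := ∫ t in (0:ℝ)..a, s t ^ p
  have hbound : ∀ x ∈ Ioo 0 (a / 2), ∀ D ∈ Icc a b,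
      |x ^ p * fDenom s p D x / (∫ t in (0:ℝ)..D, s t ^ p) - 1| ≤ x ^ p * (x * M ^ p) / m +
        |(x / s x) ^ p - 1| + (x / s x) ^ p * ((∫ t in (0:ℝ)..x, s t ^ p) / m) := by
    rintro x ⟨hx, hxa⟩ D ⟨haD, hDb⟩
    have hsx : 0 < s x := hpos x ⟨hx, by linarith⟩
    rw [fDenom, integral_div_rpow_eq hs hp hpos hx (by linarith) hDb, Real.div_rpow hx.le hsx.le]
    exact abs_mul_add_div_sub_one_le (Real.rpow_pos_of_pos hx p) (Real.rpow_pos_of_pos hsx p)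
      (integral_ratio_rpow_nonneg hpos hx (by linarith) hDb)
      (integral_ratio_rpow_le hs hp hpos (half_pos ha) hM hx (by linarith) hDb)
      (integral_rpow_pos hs hp hpos ⟨ha, haD.trans hDb⟩)
      (integral_rpow_mono hs hp hpos ha.le haD hDb)
      (integral_rpow_pos hs hp hpos ⟨hx, by linarith⟩).le
  filter_upwards [Ioo_mem_nhdsGT (half_pos ha),
    (tendsto_bound_nhdsGT_zero hs hp hlim M m).eventually
      (ge_mem_nhds (lt_min (half_pos hε) one_half_pos))] with x hx hgx D hD
  obtain ⟨hgε, hg_half⟩ := le_min_iff.1 hgx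
  have hinv := abs_inv_sub_one_le_two_mul (hbound x hx D hD) hg_half
  rw [inv_div] at hinv
  rw [inv_mul_eq_div, div_div, mul_comm (fDenom s p D x)]
  linarith

end Asymptotics

lemma sK_of_pos {κ : ℝ} (hκ : 0 < κ) : sK κ = fun θ => Real.sin (√κ * θ) / √κ :=
  funext fun _ => if_pos hκ

lemma sK_zero_left : sK 0 = id :=
  funext fun _ => by simp [sK]

lemma sK_of_neg {κ : ℝ} (hκ : κ < 0) : sK κ = fun θ => Real.sinh (√(-κ) * θ) / √(-κ) :=
  funext fun _ => by simp [sK, hκ.not_gt, hκ.ne]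

lemma continuous_sK (κ : ℝ) : Continuous (sK κ) := by
  rcases lt_trichotomy κ 0 with hκ | rfl | hκ
  · rw [sK_of_neg hκ]; fun_prop
  · rw [sK_zero_left]; exact continuous_id
  · rw [sK_of_pos hκ]; fun_prop

lemma sK_pos {κ θ : ℝ} (hθ : 0 < θ) (hκθ : 0 < κ → √κ * θ < Real.pi) : 0 < sK κ θ := by
  rcases lt_trichotomy κ 0 with hκ | rfl | hκ
  · rw [sK_of_neg hκ]
    have hsqrt := Real.sqrt_pos.2 (neg_pos.2 hκ)
    exact div_pos (Real.sinh_pos_iff.2 (by positivity)) hsqrt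
  · rwa [sK_zero_left]
  · rw [sK_of_pos hκ]
    have hsqrt := Real.sqrt_pos.2 hκ
    exact div_pos (Real.sin_pos_of_pos_of_lt_pi (by positivity) (hκθ hκ)) hsqrt

lemma hasDerivAt_sK_zero (κ : ℝ) : HasDerivAt (sK κ) 1 0 := by
  rcases lt_trichotomy κ 0 with hκ | rfl | hκ
  · rw [sK_of_neg hκ]
    have h := (((hasDerivAt_id (0:ℝ)).const_mul √(-κ)).sinh).div_const √(-κ)
    have hne : √(-κ) ≠ 0 := (Real.sqrt_pos.2 (neg_pos.2 hκ)).ne'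
    simpa [hne] using h
  · rw [sK_zero_left]; exact hasDerivAt_id 0
  · rw [sK_of_pos hκ]
    have h := (((hasDerivAt_id (0:ℝ)).const_mul √κ).sin).div_const √κ
    have hne : √κ ≠ 0 := (Real.sqrt_pos.2 hκ).ne'
    simpa [hne] using h

lemma tendsto_sK_div_self (κ : ℝ) : Tendsto (fun θ => sK κ θ / θ) (𝓝[>] 0) (𝓝 1) := by
  have h := (hasDerivAt_iff_tendsto_slope.1 (hasDerivAt_sK_zero κ)).mono_left
    (nhdsWithin_mono _ fun θ (hθ : 0 < θ) => hθ.ne')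
  have h0 : sK κ 0 = 0 := by simp [sK]
  refine h.congr' ?_
  filter_upwards with θ
  simp [slope_def_field, h0]

/-- `f_{K,N,D}(x) = (x^(N-1)/k_D)(1+o(1))` as `x → 0⁺`, uniformly in `D ∈ [λL, L]`. -/
theorem stmt0 (N κ lam L : ℝ) (hN : 1 < N) (hκ : κ = -1 ∨ κ = 0 ∨ κ = 1)
    (hlam : lam ∈ Set.Ioc (0:ℝ) 1) (hL : 0 < L) (hLpi : κ = 1 → L < Real.pi) :
    ∀ ε > 0, ∃ δ₀ > 0, ∀ D ∈ Set.Icc (lam * L) L, ∀ x ∈ Set.Ioo (0:ℝ) δ₀,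
      |fKND κ N D x * kD κ N D / x ^ (N - 1) - 1| ≤ ε := by
  intro ε hε
  have hpos : ∀ t ∈ Ioc 0 L, 0 < sK κ t := fun t ht => sK_pos ht.1 fun hκpos => by
    obtain rfl := (hκ.resolve_left fun h => by linarith).resolve_left hκpos.ne'
    simpa using ht.2.trans_lt (hLpi rfl)
  obtain ⟨δ₀, hδ₀, hsub⟩ := mem_nhdsGT_iff_exists_Ioo_subset.1
    (eventually_forall_abs_inv_fDenom_mul_div_sub_one_le (continuous_sK κ) (sub_pos.2 hN)
      (mul_pos hlam.1 hL) hpos (tendsto_sK_div_self κ) hε)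
  exact ⟨δ₀, hδ₀, fun D hD x hx => hsub hx D hD⟩
end

section
/- Let N > 1, K = N−1 and D = π, and set k_π = ∫₀^π (sin t)^{N−1} dt. Then for every ε > 0 there exists v̄ > 0, depending only on N and ε, such that for every a ∈ (0, π), if v := v_{N−1,N,π}(a) < v̄ then |f_{N−1,N,π}(a)·k_π^{1/N} / (N^{(N−1)/N} v^{(N−1)/N}) − 1| ≤ ε. In other words, Ĩ_{N−1,N,π}(v) = f_{N−1,N,π}(a_{N−1,N,π}(v)) = k_π^{−1/N} N^{(N−1)/N} v^{(N−1)/N} (1 + o(1)) as v → 0⁺. -/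
open MeasureTheory Filter Set

/-! For `κ = 1`, `D = π` every ratio of `sK` in the model density is `sin y / sin a`, so with
`k_a = ∫₀^a sin^(N-1)` one gets `f(a) = sin a ^ (N-1) / k_π` and `v(a) = k_a / k_π`; the quantity
in the theorem becomes `sin a ^ (N-1) / (N k_a)^((N-1)/N)`. Since `sin t ≤ t` and, by concavity,
`sin t ≥ (sin a / a) t` on `[0, a]`, we get `sin a ^ (N-1) a ≤ N k_a ≤ a ^ N`, which squeezes that
quantity between `(sin a / a)^(N-1)` and `1`. Finally `v` is strictly increasing in `a`, so small
volumes force small `a`. -/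

open Real Topology

lemma sK_one (θ : ℝ) : sK 1 θ = sin θ := by
  simp [sK]

lemma kD_one (N a : ℝ) : kD 1 N a = ∫ t in (0:ℝ)..a, sin t ^ (N - 1) := by
  simp only [kD, sK_one]

lemma continuous_sin_rpow {p : ℝ} (hp : 0 ≤ p) : Continuous fun t => sin t ^ p :=
  (continuous_rpow_const hp).comp continuous_sin

lemma integral_sin_rpow_pos {p a b : ℝ} (hp : 0 ≤ p) (ha : 0 ≤ a) (hab : a < b) (hb : b ≤ π) :
    0 < ∫ t in a..b, sin t ^ p :=
  intervalIntegral.intervalIntegral_pos_of_pos_on ((continuous_sin_rpow hp).intervalIntegrable _ _)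
    (fun _ ht => rpow_pos_of_pos (sin_pos_of_pos_of_lt_pi (ha.trans_lt ht.1) (ht.2.trans_le hb)) _)
    hab

lemma integral_div_sin_rpow {p a b c : ℝ} (ha : 0 ≤ a) (hab : a ≤ b) (hb : b ≤ π) (hc : 0 ≤ c) :
    ∫ t in a..b, (sin t / c) ^ p = (∫ t in a..b, sin t ^ p) / c ^ p := by
  rw [← intervalIntegral.integral_div]
  refine intervalIntegral.integral_congr fun t ht => ?_
  rw [uIcc_of_le hab] at ht
  exact div_rpow (sin_nonneg_of_nonneg_of_le_pi (ha.trans ht.1) (ht.2.trans hb)) hc _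

lemma integral_rpow_sub_one_zero {N : ℝ} (hN : 0 < N) (a : ℝ) :
    ∫ y in (0:ℝ)..a, y ^ (N - 1) = a ^ N / N := by
  rw [integral_rpow (Or.inl (by linarith)), sub_add_cancel, zero_rpow hN.ne', sub_zero]

lemma sin_div_mul_le_sin {a y : ℝ} (haπ : a ≤ π) (hy : y ∈ Icc 0 a) : sin a / a * y ≤ sin y := by
  obtain ⟨hy0, hya⟩ := hy
  rcases hy0.eq_or_lt with rfl | hy0
  · simp
  have ha : 0 < a := hy0.trans_le hya
  have h := strictConcaveOn_sin_Icc.concaveOn.2 ⟨le_rfl, pi_pos.le⟩ ⟨ha.le, haπ⟩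
    (sub_nonneg.2 ((div_le_one ha).2 hya)) (div_nonneg hy0.le ha.le) (sub_add_cancel 1 (y / a))
  simp only [smul_eq_mul, sin_zero, mul_zero, zero_add, div_mul_cancel₀ y ha.ne'] at h
  rwa [div_mul_eq_mul_div, mul_comm, ← div_mul_eq_mul_div]

section kD

variable {N : ℝ} (hN : 1 ≤ N)
include hN

lemma kD_one_add_integral (a : ℝ) : kD 1 N a + ∫ t in a..π, sin t ^ (N - 1) = kD 1 N π := by
  rw [kD_one, kD_one]
  exact intervalIntegral.integral_add_adjacent_intervals
    ((continuous_sin_rpow (by linarith)).intervalIntegrable _ _)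
    ((continuous_sin_rpow (by linarith)).intervalIntegrable _ _)

lemma kD_one_pos {a : ℝ} (ha : 0 < a) (haπ : a ≤ π) : 0 < kD 1 N a := by
  rw [kD_one]
  exact integral_sin_rpow_pos (by linarith) le_rfl ha haπ

lemma strictMonoOn_kD_one : StrictMonoOn (kD 1 N) (Icc 0 π) := by
  intro a ha b hb hab
  rw [kD_one, kD_one, ← intervalIntegral.integral_add_adjacent_intervals
    ((continuous_sin_rpow (by linarith)).intervalIntegrable 0 a)
    ((continuous_sin_rpow (by linarith)).intervalIntegrable a b)]
  linarith [integral_sin_rpow_pos (by linarith : 0 ≤ N - 1) ha.1 hab hb.2]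

lemma mul_kD_one_le_rpow {a : ℝ} (ha : 0 ≤ a) (haπ : a ≤ π) : N * kD 1 N a ≤ a ^ N := by
  have hle : kD 1 N a ≤ ∫ y in (0:ℝ)..a, y ^ (N - 1) := by
    rw [kD_one]
    refine intervalIntegral.integral_mono_on ha
      ((continuous_sin_rpow (by linarith)).intervalIntegrable _ _)
      ((continuous_rpow_const (by linarith)).intervalIntegrable _ _) fun y hy => ?_
    exact rpow_le_rpow (sin_nonneg_of_nonneg_of_le_pi hy.1 (hy.2.trans haπ)) (sin_le hy.1)
      (by linarith)
  rw [integral_rpow_sub_one_zero (by linarith) a, le_div_iff₀ (by linarith)] at hle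
  linarith

lemma sin_rpow_mul_le_mul_kD_one {a : ℝ} (ha : 0 < a) (haπ : a ≤ π) :
    sin a ^ (N - 1) * a ≤ N * kD 1 N a := by
  have hsa : 0 ≤ sin a := sin_nonneg_of_nonneg_of_le_pi ha.le haπ
  have hle : ∫ y in (0:ℝ)..a, (sin a / a) ^ (N - 1) * y ^ (N - 1) ≤ kD 1 N a := by
    rw [kD_one]
    refine intervalIntegral.integral_mono_on ha.le
      (((continuous_rpow_const (by linarith)).const_mul _).intervalIntegrable _ _)
      ((continuous_sin_rpow (by linarith)).intervalIntegrable _ _) fun y hy => ?_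
    rw [← mul_rpow (div_nonneg hsa ha.le) hy.1]
    exact rpow_le_rpow (mul_nonneg (div_nonneg hsa ha.le) hy.1) (sin_div_mul_le_sin haπ hy)
      (by linarith)
  rw [intervalIntegral.integral_const_mul, integral_rpow_sub_one_zero (by linarith) a,
    div_rpow hsa ha.le] at hle
  have hpow : a ^ N = a ^ (N - 1) * a := by rw [← rpow_add_one ha.ne', sub_add_cancel]
  have : 0 < a ^ (N - 1) := rpow_pos_of_pos ha _
  calc sin a ^ (N - 1) * a = N * (sin a ^ (N - 1) / a ^ (N - 1) * (a ^ N / N)) := by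
        rw [hpow]; field_simp
    _ ≤ N * kD 1 N a := by gcongr

lemma fKND_one_pi {a : ℝ} (ha : a ∈ Ioo 0 π) : fKND 1 N π a = sin a ^ (N - 1) / kD 1 N π := by
  obtain ⟨ha0, haπ⟩ := ha
  have hsa : 0 ≤ sin a := (sin_pos_of_pos_of_lt_pi ha0 haπ).le
  simp only [fKND, sK_one, sin_pi_sub]
  rw [integral_div_sin_rpow le_rfl ha0.le haπ.le hsa,
    integral_div_sin_rpow ha0.le haπ.le le_rfl hsa, ← add_div, ← kD_one,
    kD_one_add_integral hN, inv_div]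

lemma vKND_one_pi {a : ℝ} (ha : a ∈ Ioo 0 π) : vKND 1 N π a = kD 1 N a / kD 1 N π := by
  obtain ⟨ha0, haπ⟩ := ha
  have hsa : 0 < sin a := sin_pos_of_pos_of_lt_pi ha0 haπ
  have hh : ∀ x ∈ uIcc 0 a, hKND 1 N π a x = fKND 1 N π a * (sin x / sin a) ^ (N - 1) := by
    intro x hx
    rw [uIcc_of_le ha0.le] at hx
    simp only [hKND, if_pos hx.2, sK_one, sin_pi_sub]
  rw [vKND, intervalIntegral.integral_congr hh, intervalIntegral.integral_const_mul,
    integral_div_sin_rpow le_rfl ha0.le haπ.le hsa.le, ← kD_one, fKND_one_pi hN ⟨ha0, haπ⟩]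
  field_simp [(rpow_pos_of_pos hsa (N - 1)).ne']

end kD

noncomputable def sinProfileRatio (N a : ℝ) : ℝ := sin a ^ (N - 1) / (N * kD 1 N a) ^ ((N - 1) / N)

section sinProfileRatio

variable {N a : ℝ} (hN : 1 ≤ N) (ha : 0 < a) (haπ : a ≤ π)
include hN ha haπ

lemma rpow_sin_div_le_sinProfileRatio : (sin a / a) ^ (N - 1) ≤ sinProfileRatio N a := by
  have hsa : 0 ≤ sin a := sin_nonneg_of_nonneg_of_le_pi ha.le haπ
  have hG : 0 < N * kD 1 N a := mul_pos (by linarith) (kD_one_pos hN ha haπ)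
  rw [sinProfileRatio, div_rpow hsa ha.le, ← mul_div_cancel₀ (N - 1) (by linarith : N ≠ 0),
    rpow_mul ha.le, mul_div_cancel₀ (N - 1) (by linarith : N ≠ 0)]
  gcongr
  exact mul_kD_one_le_rpow hN ha.le haπ

lemma sinProfileRatio_le_one : sinProfileRatio N a ≤ 1 := by
  have hsa : 0 ≤ sin a := sin_nonneg_of_nonneg_of_le_pi ha.le haπ
  have hG : 0 < N * kD 1 N a := mul_pos (by linarith) (kD_one_pos hN ha haπ)
  rw [sinProfileRatio, div_le_one (rpow_pos_of_pos hG _), ← mul_div_cancel₀ (N - 1)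
    (by linarith : N ≠ 0), rpow_mul hsa, mul_div_cancel₀ (N - 1) (by linarith : N ≠ 0)]
  gcongr
  calc sin a ^ N = sin a ^ (N - 1) * sin a := by
        rw [← rpow_add_one' hsa (by linarith), sub_add_cancel]
    _ ≤ sin a ^ (N - 1) * a := by gcongr; exact sin_le ha.le
    _ ≤ N * kD 1 N a := sin_rpow_mul_le_mul_kD_one hN ha haπ

end sinProfileRatio

lemma tendsto_sinProfileRatio {N : ℝ} (hN : 1 ≤ N) :
    Tendsto (sinProfileRatio N) (𝓝[>] 0) (𝓝 1) := by
  have hsinc : Tendsto (fun a => (sin a / a) ^ (N - 1)) (𝓝[>] 0) (𝓝 1) := by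
    have h := ((continuous_rpow_const (by linarith : 0 ≤ N - 1)).comp continuous_sinc).tendsto 0
    rw [Function.comp_apply, sinc_zero, one_rpow] at h
    refine (h.mono_left nhdsWithin_le_nhds).congr' ?_
    filter_upwards [self_mem_nhdsWithin] with a ha
    rw [Function.comp_apply, sinc_of_ne_zero (ne_of_gt ha)]
  refine tendsto_of_tendsto_of_tendsto_of_le_of_le' hsinc tendsto_const_nhds ?_ ?_ <;>
    filter_upwards [Ioo_mem_nhdsGT pi_pos] with a ha
  exacts [rpow_sin_div_le_sinProfileRatio hN ha.1 ha.2.le, sinProfileRatio_le_one hN ha.1 ha.2.le]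

lemma fKND_one_pi_mul_div_eq_sinProfileRatio {N a : ℝ} (hN : 1 ≤ N) (ha : a ∈ Ioo 0 π) :
    fKND 1 N π a * kD 1 N π ^ (1 / N) / (N ^ ((N - 1) / N) * vKND 1 N π a ^ ((N - 1) / N)) =
      sinProfileRatio N a := by
  have hk : 0 < kD 1 N π := kD_one_pos hN pi_pos le_rfl
  have hka : 0 < kD 1 N a := kD_one_pos hN ha.1 ha.2.le
  have hk1 : kD 1 N π ^ (1 / N) * kD 1 N π ^ ((N - 1) / N) = kD 1 N π := by
    rw [← rpow_add hk, ← add_div, add_sub_cancel, div_self (by linarith), rpow_one]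
  rw [fKND_one_pi hN ha, vKND_one_pi hN ha, sinProfileRatio, div_rpow hka.le hk.le,
    mul_rpow (by linarith) hka.le]
  have : 0 < kD 1 N π ^ ((N - 1) / N) := rpow_pos_of_pos hk _
  have : 0 < N ^ ((N - 1) / N) := rpow_pos_of_pos (by linarith) _
  have : 0 < kD 1 N a ^ ((N - 1) / N) := rpow_pos_of_pos hka _
  field_simp
  linear_combination sin a ^ (N - 1) * hk1

/-- `Ĩ_{N-1,N,π}(v) = f_{N-1,N,π}(a_{N-1,N,π}(v))
= k_π^(-1/N) N^((N-1)/N) v^((N-1)/N) (1+o(1))` as `v → 0⁺`. -/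
theorem stmt6 (N : ℝ) (hN : 1 < N) :
    ∀ ε > 0, ∃ vbar > 0, ∀ a ∈ Set.Ioo (0:ℝ) Real.pi,
      vKND 1 N Real.pi a < vbar →
      |fKND 1 N Real.pi a * kD 1 N Real.pi ^ (1 / N) /
        (N ^ ((N - 1) / N) * vKND 1 N Real.pi a ^ ((N - 1) / N)) - 1| ≤ ε := by
  intro ε hε
  obtain ⟨δ, hδ, hclose⟩ := mem_nhdsGT_iff_exists_Ioo_subset.1
    ((tendsto_sinProfileRatio hN.le).eventually (Metric.closedBall_mem_nhds 1 hε))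
  have hδπ : 0 < min δ π := lt_min hδ pi_pos
  have hk : 0 < kD 1 N π := kD_one_pos hN.le pi_pos le_rfl
  refine ⟨kD 1 N (min δ π) / kD 1 N π, div_pos (kD_one_pos hN.le hδπ (min_le_right _ _)) hk,
    fun a ha hv => ?_⟩
  rw [vKND_one_pi hN.le ha, div_lt_div_iff_of_pos_right hk, (strictMonoOn_kD_one hN.le).lt_iff_lt
    ⟨ha.1.le, ha.2.le⟩ ⟨hδπ.le, min_le_right _ _⟩] at hv
  rw [fKND_one_pi_mul_div_eq_sinProfileRatio hN.le ha, ← Real.dist_eq]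
  exact hclose ⟨ha.1, hv.trans_le (min_le_left _ _)⟩
end
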